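/- For any Boolean function f: {0,1}^n → {0,1}, the distance of f from monotonicity times 2^n equals the size of the largest matching in the violation graph of f. Here the distance from monotonicity is ε(f) = min over monotone g of Pr_{x uniform}[f(x) ≠ g(x)]. -/

import Mathlib

/-!
A monotone `g` disagrees with `f` at an endpoint of every violating pair, so no matching is
larger than the distance. Conversely, fix a monotone `g` nearest to `f` and split the set where
they disagree into `A = {f = 1, g = 0}` and `B = {f = 0, g = 1}`. If some `S ⊆ A` had fewer than
`|S|` neighbours `y > x ∈ S` with `f y = g y = 0`, raising `g` to `1` on the up-set of `S` would
give a nearer monotone function. So Hall's theorem matches `A` upwards into `{f = g = 0}`, and,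
in the order dual with all values negated, `B` downwards into `{f = g = 1}`. These four classes
are pairwise disjoint, so the two matchings together form a matching of size `|A| + |B|`.
-/

/-- A violating pair of `f`: `x < y` coordinatewise but `f x = 1 > 0 = f y`. -/
def ViolPair {n : ℕ} (f : (Fin n → Bool) → Bool) (x y : Fin n → Bool) : Prop :=
  x < y ∧ f x = true ∧ f y = false

/-- A matching in the violation graph: a set of violating pairs that are pairwise
vertex-disjoint. -/
def IsViolMatching {n : ℕ} (f : (Fin n → Bool) → Bool)
    (M : Finset ((Fin n → Bool) × (Fin n → Bool))) : Prop :=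
  (∀ e ∈ M, ViolPair f e.1 e.2) ∧
    ∀ e ∈ M, ∀ e' ∈ M, e ≠ e' →
      e.1 ≠ e'.1 ∧ e.1 ≠ e'.2 ∧ e.2 ≠ e'.1 ∧ e.2 ≠ e'.2

open Finset

section NearestMonotone

variable {α : Type*} [Fintype α]

theorem card_filter_ne_eq_add (f g : α → Bool) :
    #{x | f x ≠ g x} = #{x | f x = true ∧ g x = false} + #{x | f x = false ∧ g x = true} := by
  classical
  rw [← card_union_of_disjoint (disjoint_filter.2 fun x _ h h' => by simp_all), ← filter_or]
  congr 1
  ext x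
  simp only [mem_filter, mem_univ, true_and]
  cases f x <;> cases g x <;> decide

variable [PartialOrder α] {f g : α → Bool}

def IsNearestMonotone (f g : α → Bool) : Prop :=
  Monotone g ∧ ∀ g' : α → Bool, Monotone g' → #{x | f x ≠ g x} ≤ #{x | f x ≠ g' x}

theorem exists_isNearestMonotone (f : α → Bool) : ∃ g, IsNearestMonotone f g := by
  classical
  obtain ⟨g, hg, hmin⟩ := (univ.filter fun g : α → Bool => Monotone g).exists_min_image
    (fun g => #{x | f x ≠ g x}) ⟨fun _ => true, by simp [monotone_const]⟩
  simp only [mem_filter, mem_univ, true_and] at hg hmin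
  exact ⟨g, hg, hmin⟩

theorem IsNearestMonotone.dual (h : IsNearestMonotone f g) :
    IsNearestMonotone (fun x : αᵒᵈ => !f (OrderDual.ofDual x))
      (fun x => !g (OrderDual.ofDual x)) := by
  refine ⟨fun a b hab => compl_le_compl (h.1 hab), fun g' hg' => ?_⟩
  have := h.2 (fun x => !g' (OrderDual.toDual x)) fun a b hab => compl_le_compl (hg' hab)
  simp only [ne_eq, Bool.not_eq_not, Bool.not_eq_eq_eq_not, Bool.not_not, ge_iff_le] at this ⊢
  exact this

theorem IsNearestMonotone.card_le_card_of_neighbors (h : IsNearestMonotone f g)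
    {S N : Finset α} (hS : ∀ x ∈ S, f x = true ∧ g x = false)
    (hN : ∀ x ∈ S, ∀ y, x < y → f y = false → g y = false → y ∈ N) : #S ≤ #N := by
  set D : Finset α := {y | f y ≠ g y}
  classical
  -- raising `g` to `1` above `S` corrects all of `S` and spoils at most the points of `N`
  let g' : α → Bool := fun y => g y || decide (∃ x ∈ S, x ≤ y)
  have hg' : Monotone g' := by
    intro a b hab
    simp only [g', Bool.le_iff_imp, Bool.or_eq_true, decide_eq_true_eq]
    rintro (ha | ⟨x, hx, hxa⟩)
    · exact Or.inl (Bool.le_iff_imp.mp (h.1 hab) ha)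
    · exact Or.inr ⟨x, hx, hxa.trans hab⟩
  have hSD : S ⊆ D := fun x hx => by simp [D, hS x hx]
  have hsub : ({y | f y ≠ g' y} : Finset α) ⊆ (D \ S) ∪ N := by
    intro y hy
    replace hy : f y ≠ g' y := (mem_filter.mp hy).2
    by_cases hup : ∃ x ∈ S, x ≤ y
    · obtain ⟨x, hx, hxy⟩ := hup
      have hg'y : g' y = true := by simpa [g'] using Or.inr ⟨x, hx, hxy⟩
      have hfy : f y = false := by simpa [hg'y] using hy
      have hyS : y ∉ S := fun hyS => by simp [(hS y hyS).1] at hfy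
      cases hgy : g y
      · have hxy' : x < y := hxy.lt_of_ne fun hxy => hyS (hxy ▸ hx)
        exact mem_union_right _ (hN x hx y hxy' hfy hgy)
      · simp [D, hyS, hfy, hgy]
    · have hgy : g' y = g y := by simp [g', hup]
      have hyS : y ∉ S := fun hy => hup ⟨y, hy, le_rfl⟩
      simp [D, ← hgy, hy, hyS]
  have hmin : #D ≤ #{y | f y ≠ g' y} := h.2 g' hg'
  have hcard := (card_le_card hsub).trans (card_union_le _ _)
  rw [card_sdiff_of_subset hSD] at hcard
  have := card_le_card hSD
  omega

theorem IsNearestMonotone.exists_injective (h : IsNearestMonotone f g) :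
    ∃ φ : {x // f x = true ∧ g x = false} → α, Function.Injective φ ∧
      ∀ x, x.1 < φ x ∧ f (φ x) = false ∧ g (φ x) = false := by
  classical
  refine (Fintype.all_card_le_filter_rel_iff_exists_injective
    fun (x : {x // f x = true ∧ g x = false}) y => x.1 < y ∧ f y = false ∧ g y = false).mp
    fun A => ?_
  rw [← card_map (Function.Embedding.subtype _)]
  refine h.card_le_card_of_neighbors (fun x hx => ?_) fun x hx y hxy hfy hgy => ?_
  · obtain ⟨x, -, rfl⟩ := mem_map.mp hx
    exact x.2
  obtain ⟨x, hxA, rfl⟩ := mem_map.mp hx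
  simp only [mem_filter, mem_univ, true_and]
  exact ⟨x, hxA, hxy, hfy, hgy⟩

theorem IsNearestMonotone.exists_matching_up (h : IsNearestMonotone f g) :
    ∃ M : Finset (α × α), #M = #{x | f x = true ∧ g x = false} ∧
      Set.InjOn Prod.fst (M : Set (α × α)) ∧ Set.InjOn Prod.snd (M : Set (α × α)) ∧
      ∀ e ∈ M, (e.1 < e.2 ∧ f e.1 = true ∧ f e.2 = false) ∧ g e.1 = false ∧ g e.2 = false := by
  obtain ⟨φ, hφ, hφlt⟩ := h.exists_injective
  refine ⟨univ.map ⟨fun x => (x.1, φ x), fun x y hxy => hφ (congrArg Prod.snd hxy)⟩,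
    by simp [Fintype.card_subtype], ?_, ?_, ?_⟩
  · rw [coe_map, coe_univ]
    exact Set.InjOn.image_of_comp Subtype.val_injective.injOn
  · rw [coe_map, coe_univ]
    exact Set.InjOn.image_of_comp hφ.injOn
  · simp only [mem_map, mem_univ, true_and]
    rintro _ ⟨x, rfl⟩
    exact ⟨⟨(hφlt x).1, x.2.1, (hφlt x).2.1⟩, x.2.2, (hφlt x).2.2⟩

theorem IsNearestMonotone.exists_matching_down (h : IsNearestMonotone f g) :
    ∃ M : Finset (α × α), #M = #{x | f x = false ∧ g x = true} ∧
      Set.InjOn Prod.fst (M : Set (α × α)) ∧ Set.InjOn Prod.snd (M : Set (α × α)) ∧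
      ∀ e ∈ M, (e.1 < e.2 ∧ f e.1 = true ∧ f e.2 = false) ∧ g e.1 = true ∧ g e.2 = true := by
  obtain ⟨M, hcard, hfst, hsnd, hM⟩ := h.dual.exists_matching_up
  let σ : αᵒᵈ × αᵒᵈ ≃ α × α :=
    (OrderDual.ofDual.prodCongr OrderDual.ofDual).trans (Equiv.prodComm α α)
  refine ⟨M.map σ.toEmbedding, ?_, ?_, ?_, ?_⟩
  · rw [card_map, hcard]
    simp only [Bool.not_eq_eq_eq_not, Bool.not_true, Bool.not_false]
    rfl
  · rw [coe_map]
    exact Set.InjOn.image_of_comp (OrderDual.ofDual.injective.comp_injOn hsnd)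
  · rw [coe_map]
    exact Set.InjOn.image_of_comp (OrderDual.ofDual.injective.comp_injOn hfst)
  · intro e he
    obtain ⟨e, heM, rfl⟩ := mem_map.mp he
    obtain ⟨⟨hlt, hf₁, hf₂⟩, hg₁, hg₂⟩ := hM e heM
    simp only [Bool.not_eq_eq_eq_not, Bool.not_true, Bool.not_false] at hf₁ hf₂ hg₁ hg₂
    simpa [σ] using ⟨⟨hlt, hf₂, hf₁⟩, hg₂, hg₁⟩

end NearestMonotone

section ViolationGraph

variable {n : ℕ} {f g : (Fin n → Bool) → Bool} {M : Finset ((Fin n → Bool) × (Fin n → Bool))}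

theorem ViolPair.ne_or_ne {x y : Fin n → Bool} (h : ViolPair f x y) (hg : Monotone g) :
    f x ≠ g x ∨ f y ≠ g y := by
  by_contra! hxy
  have := hg h.1.le
  rw [← hxy.1, ← hxy.2, h.2.1, h.2.2] at this
  exact absurd this (by decide)

theorem IsViolMatching.card_le (hM : IsViolMatching f M) (hg : Monotone g) :
    #M ≤ #{x | f x ≠ g x} := by
  refine card_le_card_of_injOn (fun e => if f e.1 ≠ g e.1 then e.1 else e.2) (fun e he => ?_)
    fun e he e' he' heq => ?_
  · have := (hM.1 e he).ne_or_ne hg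
    simp only [mem_coe, mem_filter, mem_univ, true_and]
    split_ifs with h₁
    · exact h₁
    · exact this.resolve_left h₁
  · by_contra hne
    obtain ⟨h₁, h₂, h₃, h₄⟩ := hM.2 e he e' he' hne
    dsimp only at heq
    split_ifs at heq <;> contradiction

theorem isViolMatching_of_injOn (hM : ∀ e ∈ M, ViolPair f e.1 e.2)
    (hfst : Set.InjOn Prod.fst (M : Set ((Fin n → Bool) × (Fin n → Bool))))
    (hsnd : Set.InjOn Prod.snd (M : Set ((Fin n → Bool) × (Fin n → Bool)))) :
    IsViolMatching f M := by
  refine ⟨hM, fun e he e' he' hne => ⟨fun h => hne (hfst he he' h), fun h => ?_, fun h => ?_,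
    fun h => hne (hsnd he he' h)⟩⟩
  · have := (hM e he).2.1
    rw [h, (hM e' he').2.2] at this
    exact absurd this (by decide)
  · have := (hM e' he').2.1
    rw [← h, (hM e he).2.2] at this
    exact absurd this (by decide)

theorem IsNearestMonotone.exists_isViolMatching (h : IsNearestMonotone f g) :
    ∃ M, IsViolMatching f M ∧ #M = #{x | f x ≠ g x} := by
  obtain ⟨M₁, hcard₁, hfst₁, hsnd₁, hM₁⟩ := h.exists_matching_up
  obtain ⟨M₀, hcard₀, hfst₀, hsnd₀, hM₀⟩ := h.exists_matching_down
  have hsep : ∀ e ∈ M₁, ∀ e' ∈ M₀, e.1 ≠ e'.1 ∧ e.2 ≠ e'.2 := fun e he e' he' =>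
    ⟨fun heq => by simpa [heq, (hM₀ e' he').2.1] using (hM₁ e he).2.1,
      fun heq => by simpa [heq, (hM₀ e' he').2.2] using (hM₁ e he).2.2⟩
  have hdisj : Disjoint M₁ M₀ := disjoint_left.2 fun e he he' => (hsep e he e he').1 rfl
  refine ⟨M₁ ∪ M₀, isViolMatching_of_injOn ?_ ?_ ?_, ?_⟩
  · intro e he
    rcases mem_union.1 he with he | he
    exacts [(hM₁ e he).1, (hM₀ e he).1]
  · rw [coe_union, Set.injOn_union (disjoint_coe.2 hdisj)]
    exact ⟨hfst₁, hfst₀, fun e he e' he' => (hsep e he e' he').1⟩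
  · rw [coe_union, Set.injOn_union (disjoint_coe.2 hdisj)]
    exact ⟨hsnd₁, hsnd₀, fun e he e' he' => (hsep e he e' he').2⟩
  · rw [card_union_of_disjoint hdisj, hcard₁, hcard₀, card_filter_ne_eq_add]

end ViolationGraph

/-- The distance of `f` from monotonicity times `2^n` (i.e. the minimum, over monotone `g`,
of the number of points where `f` and `g` disagree) equals the size of the largest
matching in the violation graph of `f`. -/
theorem stmt1 (n : ℕ) (f : (Fin n → Bool) → Bool) :
    sInf {d : ℕ | ∃ g : (Fin n → Bool) → Bool, Monotone g ∧
        d = (Finset.univ.filter fun x => f x ≠ g x).card}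
      = sSup {m : ℕ | ∃ M, IsViolMatching f M ∧ M.card = m} := by
  obtain ⟨g, hg⟩ := exists_isNearestMonotone f
  obtain ⟨M, hM, hcard⟩ := hg.exists_isViolMatching
  have hInf : IsLeast {d : ℕ | ∃ g : (Fin n → Bool) → Bool, Monotone g ∧ d = #{x | f x ≠ g x}}
      #{x | f x ≠ g x} :=
    ⟨⟨g, hg.1, rfl⟩, fun _ ⟨g', hg', hd⟩ => hd ▸ hg.2 g' hg'⟩
  have hSup : IsGreatest {m : ℕ | ∃ M, IsViolMatching f M ∧ #M = m} #{x | f x ≠ g x} :=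
    ⟨⟨M, hM, hcard⟩, fun _ ⟨M', hM', hm⟩ => hm ▸ hM'.card_le hg.1⟩
  rw [hInf.csInf_eq, hSup.csSup_eq]
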